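/- Let G be a group acting on a set X, let n be a natural number, let d : Fin (2n+3) → X, and let σ be a permutation of Fin (n+1). Suppose: (i) for every i ≤ n there exists η_i ∈ G with η_i • d_{2i} = d_{2i+1}; and (ii) for every i ≤ n there exists f_i ∈ G with f_i • d_{2i} = d_{2σ(i)+2} and f_i • d_{2i+1} = d_{2σ(i)+1}. Then there exists an element g of the commutator subgroup of G such that g • d_0 = d_{2n+2}. -/

import Mathlib

/-!
To go from `d (2k)` to `d (2k+2)`, apply `η_k` to reach `d (2k+1)`, then run backwards along
`f_i η_i f_i⁻¹` with `σ i = k`, which moves `d (2k+2)` to `d (2k+1)`. In the abelianization this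
step is `η_i⁻¹ η_k`, so the composite of all steps maps to `∏ₖ η_{σ⁻¹ k}⁻¹ η_k = 1`.
-/

section

variable {G X : Type*} [Group G] [MulAction G X]

theorem conj_inv_mul_smul_eq {η η' f : G} {x y u v w : X} (hη : η • x = y)
    (hη' : η' • u = v) (hfu : f • u = w) (hfv : f • v = y) :
    (f * η'⁻¹ * f⁻¹ * η) • x = w := by
  rw [mul_smul, mul_smul, mul_smul, hη, inv_smul_eq_iff.mpr hfv.symm,
    inv_smul_eq_iff.mpr hη'.symm, hfu]

theorem map_conj_inv_mul {A : Type*} [CommGroup A] (φ : G →* A) (η η' f : G) :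
    φ (f * η'⁻¹ * f⁻¹ * η) = (φ η')⁻¹ * φ η := by
  rw [map_mul, map_mul, map_mul, map_inv, map_inv, mul_right_comm (φ f), mul_inv_cancel,
    one_mul]

theorem exists_smul_eq_of_chain {A : Type*} [CommMonoid A] (φ : G →* A) {m : ℕ}
    (p : Fin (m + 1) → X) (s : Fin m → G) (hs : ∀ k, s k • p k.castSucc = p k.succ) :
    ∃ g : G, φ g = ∏ k, φ (s k) ∧ g • p 0 = p (Fin.last m) := by
  induction m with
  | zero => exact ⟨1, by simp, one_smul G _⟩
  | succ m ih =>
    obtain ⟨g, hφg, hg⟩ := ih (p ∘ Fin.castSucc) (s ∘ Fin.castSucc) fun k => hs k.castSucc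
    refine ⟨s (Fin.last m) * g, ?_, ?_⟩
    · rw [Fin.prod_univ_castSucc, map_mul, hφg, mul_comm]
      rfl
    · rw [mul_smul, ← Fin.castSucc_zero, ← Function.comp_apply (f := p), hg, Function.comp_apply,
        hs, Fin.succ_last]

end

theorem prod_inv_comp_symm_mul_eq_one {ι A : Type*} [Fintype ι] [CommGroup A] (σ : Equiv.Perm ι)
    (a : ι → A) : ∏ k, (a (σ.symm k))⁻¹ * a k = 1 := by
  rw [Finset.prod_mul_distrib, Finset.prod_inv_distrib, Equiv.prod_comp, inv_mul_cancel]

/-- If `d : Fin (2n+3) → X` and `σ` is a permutation of `Fin (n+1)` such that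
some `η_i ∈ G` sends `d (2i)` to `d (2i+1)` and some `f_i ∈ G` sends `d (2i)` to
`d (2σ(i)+2)` and `d (2i+1)` to `d (2σ(i)+1)`, then some element of the commutator
subgroup of `G` sends `d 0` to `d (2n+2)`. -/
theorem stmt4 {G X : Type*} [Group G] [MulAction G X] (n : ℕ)
    (d : Fin (2 * n + 3) → X) (σ : Equiv.Perm (Fin (n + 1)))
    (h1 : ∀ i : Fin (n + 1), ∃ η : G,
      η • d ⟨2 * i.val, by have := i.isLt; omega⟩ = d ⟨2 * i.val + 1, by have := i.isLt; omega⟩)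
    (h2 : ∀ i : Fin (n + 1), ∃ f : G,
      f • d ⟨2 * i.val, by have := i.isLt; omega⟩
          = d ⟨2 * (σ i).val + 2, by have := (σ i).isLt; omega⟩ ∧
      f • d ⟨2 * i.val + 1, by have := i.isLt; omega⟩
          = d ⟨2 * (σ i).val + 1, by have := (σ i).isLt; omega⟩) :
    ∃ g ∈ commutator G, g • d ⟨0, by omega⟩ = d ⟨2 * n + 2, by omega⟩ := by
  choose η hη using h1
  choose f hfu hfv using h2
  let s k := f (σ.symm k) * (η (σ.symm k))⁻¹ * (f (σ.symm k))⁻¹ * η k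
  have hs (k : Fin (n + 1)) :
      s k • d ⟨2 * k.val, by omega⟩ = d ⟨2 * k.val + 2, by omega⟩ := by
    have hu := hfu (σ.symm k)
    have hv := hfv (σ.symm k)
    simp only [Equiv.apply_symm_apply] at hu hv
    exact conj_inv_mul_smul_eq (hη k) (hη _) hu hv
  obtain ⟨g, hφg, hg⟩ := exists_smul_eq_of_chain Abelianization.of
    (fun k : Fin (n + 2) => d ⟨2 * k.val, by omega⟩) s fun k => by simpa [mul_add] using hs k
  refine ⟨g, ?_, by simpa [mul_add] using hg⟩
  rw [← Abelianization.ker_of, MonoidHom.mem_ker, hφg]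
  simp only [s, map_conj_inv_mul]
  exact prod_inv_comp_symm_mul_eq_one σ (Abelianization.of ∘ η)
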